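/- arXiv:2401.16540 — 2 statements merged into one kernel-verified Lean document; each statement's English description precedes it below -/
import Mathlib

section
/- Let d ≥ 2 and n ≥ d + 1. A t×n binary code C is a (≤d)-union-free code if and only if C is both a (=d)-union-free code and a (d−1)-disjunctive code. -/
open Finset

/-- The Boolean sum (componentwise OR) of the columns of `C` indexed by `S`. -/
noncomputable def boolSum {t n : ℕ} (C : Fin t → Fin n → Bool) (S : Finset (Fin n)) : Fin t → Bool :=
  fun r => S.sup fun i => C r i

/-- `covers x y` : the vector `x` covers the vector `y`, i.e. `x ∨ y = x`. -/
def covers {t : ℕ} (x y : Fin t → Bool) : Prop := ∀ r, y r = true → x r = true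

instance {t : ℕ} (x y : Fin t → Bool) : Decidable (covers x y) := by
  unfold covers; infer_instance

/-- `C` is `d`-disjunctive: the Boolean sum of any `d` columns covers no other column. -/
def Disjunctive {t n : ℕ} (d : ℕ) (C : Fin t → Fin n → Bool) : Prop :=
  ∀ D : Finset (Fin n), D.card = d → ∀ j ∉ D, ¬ covers (boolSum C D) (fun i => C i j)

/-- `C` is a strongly `d`-separable matrix. -/
def SSM {t n : ℕ} (d : ℕ) (C : Fin t → Fin n → Bool) : Prop :=
  ∀ D0 : Finset (Fin n), D0.card = d →
    {i : Fin n | ∀ D' : Finset (Fin n), boolSum C D' = boolSum C D0 → i ∈ D'} = ↑D0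

/-- `C` is a `(=d)`-union-free code. -/
def UnionFreeEq {t n : ℕ} (d : ℕ) (C : Fin t → Fin n → Bool) : Prop :=
  ∀ D1 D2 : Finset (Fin n), D1.card = d → D2.card = d → D1 ≠ D2 →
    boolSum C D1 ≠ boolSum C D2

/-- `C` is a `(≤d)`-union-free code. -/
def UnionFreeLe {t n : ℕ} (d : ℕ) (C : Fin t → Fin n → Bool) : Prop :=
  ∀ D1 D2 : Finset (Fin n), D1.card ≤ d → D2.card ≤ d → D1 ≠ D2 →
    boolSum C D1 ≠ boolSum C D2

/-- The number of columns of `C` covered by the vector `r`. -/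
def coveredCount {t n : ℕ} (C : Fin t → Fin n → Bool) (r : Fin t → Bool) : ℕ :=
  (Finset.univ.filter fun j : Fin n => covers r (fun i => C i j)).card

/-- `C` is a `(=d)`-union-free code with fast decoding. -/
def UFFDEq {t n : ℕ} (d : ℕ) (C : Fin t → Fin n → Bool) : Prop :=
  UnionFreeEq d C ∧
    ∀ D : Finset (Fin n), D.card = d →
      (coveredCount C (boolSum C D) : ℝ) ≤ (n : ℝ) ^ ((1 : ℝ) / d)

/-- `C` is a `(≤d)`-union-free code with fast decoding. -/
def UFFDLe {t n : ℕ} (d : ℕ) (C : Fin t → Fin n → Bool) : Prop :=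
  UnionFreeLe d C ∧
    ∀ D : Finset (Fin n), D.card ≤ d →
      (coveredCount C (boolSum C D) : ℝ) ≤ (n : ℝ) ^ ((1 : ℝ) / d)

lemma boolSum_eq_true {t n : ℕ} (C : Fin t → Fin n → Bool) (S : Finset (Fin n)) (r : Fin t) :
    boolSum C S r = true ↔ ∃ i ∈ S, C r i = true := by
  constructor
  · intro h
    by_contra hc
    push_neg at hc
    have hf : (S.sup fun i => C r i) = false :=
      (Finset.sup_eq_bot_iff _ S).mpr (fun i hi => by simpa using hc i hi)
    simp only [boolSum] at h
    rw [hf] at h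
    exact Bool.false_ne_true h
  · rintro ⟨i, hi, hci⟩
    have hle := Finset.le_sup (f := fun i => C r i) hi
    simp only [hci] at hle
    exact le_antisymm (by simp) hle

lemma covers_boolSum_of_subset {t n : ℕ} (C : Fin t → Fin n → Bool) {A B : Finset (Fin n)}
    (h : A ⊆ B) : covers (boolSum C B) (boolSum C A) := by
  intro r hr
  rw [boolSum_eq_true] at hr ⊢
  obtain ⟨i, hi, hc⟩ := hr
  exact ⟨i, h hi, hc⟩

lemma covers_col {t n : ℕ} (C : Fin t → Fin n → Bool) {B : Finset (Fin n)} {j : Fin n}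
    (h : j ∈ B) : covers (boolSum C B) (fun i => C i j) := by
  intro r hr
  rw [boolSum_eq_true]
  exact ⟨j, h, hr⟩

lemma key_contra {t n d : ℕ} (hd : 2 ≤ d) (hn : d + 1 ≤ n)
    {C : Fin t → Fin n → Bool} (hdisj : Disjunctive (d - 1) C)
    {A B : Finset (Fin n)} (hA : A.card ≤ d - 1) {j : Fin n} (hjB : j ∈ B) (hjA : j ∉ A)
    (heq : boolSum C A = boolSum C B) : False := by
  have hsub : A ⊆ Finset.univ.erase j := by
    intro x hx
    exact Finset.mem_erase.mpr ⟨fun h => hjA (h ▸ hx), Finset.mem_univ x⟩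
  have hcard : d - 1 ≤ (Finset.univ.erase j : Finset (Fin n)).card := by
    rw [Finset.card_erase_of_mem (Finset.mem_univ j), Finset.card_univ, Fintype.card_fin]
    omega
  obtain ⟨E, hAE, hEe, hEcard⟩ := Finset.exists_subsuperset_card_eq hsub hA hcard
  have hjE : j ∉ E := fun h => (Finset.mem_erase.mp (hEe h)).1 rfl
  apply hdisj E hEcard j hjE
  intro r hr
  have h1 : boolSum C B r = true := covers_col C hjB r hr
  have h2 : boolSum C A r = true := by rw [heq]; exact h1
  exact covers_boolSum_of_subset C hAE r h2

theorem unionFreeLe_iff' {t n d : ℕ} (hd : 2 ≤ d) (hn : d + 1 ≤ n)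
    (C : Fin t → Fin n → Bool) :
    UnionFreeLe d C ↔ UnionFreeEq d C ∧ Disjunctive (d - 1) C := by
  constructor
  · intro h
    refine ⟨fun D1 D2 h1 h2 => h D1 D2 h1.le h2.le, ?_⟩
    intro D hD j hjD hcov
    have hne : insert j D ≠ D := fun he => hjD (he ▸ Finset.mem_insert_self j D)
    apply h (insert j D) D (by rw [Finset.card_insert_of_notMem hjD, hD]; omega)
      (by omega) hne
    funext r
    by_cases hb : boolSum C D r = true
    · rw [hb]
      rw [boolSum_eq_true] at hb ⊢
      obtain ⟨i, hi, hc⟩ := hb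
      exact ⟨i, Finset.mem_insert_of_mem hi, hc⟩
    · simp only [Bool.not_eq_true] at hb
      rw [hb]
      rw [Bool.eq_false_iff]
      intro hT
      rw [boolSum_eq_true] at hT
      obtain ⟨i, hi, hc⟩ := hT
      rcases Finset.mem_insert.mp hi with rfl | hi
      · have := hcov r hc
        simp [this] at hb
      · rw [Bool.eq_false_iff] at hb
        exact hb ((boolSum_eq_true C D r).mpr ⟨i, hi, hc⟩)
  · rintro ⟨hueq, hdisj⟩
    intro D1 D2 h1 h2 hne heq
    by_cases hc1 : D1.card = d
    · by_cases hc2 : D2.card = d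
      · exact hueq D1 D2 hc1 hc2 hne heq
      · -- D2.card ≤ d - 1
        rcases (Finset.not_subset.mp (fun hs : D1 ⊆ D2 => hc2
            (le_antisymm h2 (hc1 ▸ Finset.card_le_card hs)))) with ⟨j, hjD1, hjD2⟩
        exact key_contra hd hn hdisj (by omega) hjD1 hjD2 heq.symm
    · -- D1.card ≤ d - 1
      by_cases hsub : D2 ⊆ D1
      · have hne' : D2 ≠ D1 := fun h => hne h.symm
        have hle := Finset.card_le_card hsub
        rcases Finset.exists_of_ssubset (Finset.ssubset_iff_subset_ne.mpr ⟨hsub, hne'⟩)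
          with ⟨j, hjD1, hjD2⟩
        exact key_contra hd hn hdisj (by omega) hjD1 hjD2 heq.symm
      · rcases Finset.not_subset.mp hsub with ⟨j, hjD2, hjD1⟩
        exact key_contra hd hn hdisj (by omega) hjD2 hjD1 heq

/-- `C` is a `(≤d)`-union-free code iff it is a `(=d)`-union-free code
and a `(d-1)`-disjunctive code. -/
theorem unionFreeLe_iff {t n d : ℕ} (hd : 2 ≤ d) (hn : d + 1 ≤ n)
    (C : Fin t → Fin n → Bool) :
    UnionFreeLe d C ↔ UnionFreeEq d C ∧ Disjunctive (d - 1) C :=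
  unionFreeLe_iff' hd hn C
end

section
/- Let C be a t×n binary code that is a disjunctive list-decoding code of strength d and list-size at most 1, i.e., the Boolean sum of the columns of any d-element subset of {1,…,n} covers at most 1 column whose index is not in that subset. Then for any two sets D1, D2 ⊆ {1,…,n} with |D1| = |D2| = d and |D1 ∩ D2| ≤ d − 2, the Boolean sums ∨_{i∈D1} c_i and ∨_{i∈D2} c_i are distinct. -/
/-! If the two Boolean sums agree, every column indexed by `D2 \ D1` is covered by the sum
over `D1`, so `D2 \ D1` lies in the list decoded from `D1`; but it has
`d - |D1 ∩ D2| ≥ 2` elements. -/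

open Finset

noncomputable def coveredOutside {t n : ℕ} (C : Fin t → Fin n → Bool) (D : Finset (Fin n)) :
    Finset (Fin n) :=
  univ.filter fun j => j ∉ D ∧ covers (boolSum C D) (fun i => C i j)

theorem covers_boolSum_of_mem {t n : ℕ} (C : Fin t → Fin n → Bool) {S : Finset (Fin n)}
    {j : Fin n} (hj : j ∈ S) : covers (boolSum C S) (fun i => C i j) := fun r hr =>
  top_unique (le_of_eq_of_le hr.symm (le_sup (f := fun i => C r i) hj))

theorem sdiff_subset_coveredOutside_of_boolSum_eq {t n : ℕ} (C : Fin t → Fin n → Bool)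
    {D1 D2 : Finset (Fin n)} (heq : boolSum C D1 = boolSum C D2) :
    D2 \ D1 ⊆ coveredOutside C D1 := by
  intro j hj
  rw [mem_sdiff] at hj
  exact mem_filter.mpr ⟨mem_univ j, hj.2, heq ▸ covers_boolSum_of_mem C hj.1⟩

/-- For a disjunctive list-decoding code of strength `d` and list-size at most `1`,
the Boolean sums of two `d`-sets intersecting in at most `d - 2` elements are distinct. -/
theorem listDecoding_separates {t n d : ℕ} (C : Fin t → Fin n → Bool)
    (hList : ∀ D : Finset (Fin n), D.card = d →
      (Finset.univ.filter fun j : Fin n =>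
        j ∉ D ∧ covers (boolSum C D) (fun i => C i j)).card ≤ 1)
    (D1 D2 : Finset (Fin n)) (h1 : D1.card = d) (h2 : D2.card = d)
    (hint : (D1 ∩ D2).card + 2 ≤ d) :
    boolSum C D1 ≠ boolSum C D2 := by
  intro heq
  have hlist : (D2 \ D1).card ≤ 1 :=
    (card_le_card (sdiff_subset_coveredOutside_of_boolSum_eq C heq)).trans (hList D1 h1)
  have hsplit := card_sdiff_add_card_inter D2 D1
  rw [inter_comm] at hsplit
  omega
end
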